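/- arXiv:1607.02032 — 3 statements merged into one kernel-verified Lean document; each statement's English description precedes it below -/
import Mathlib

section
/- Let F be a field and let r be an even integer. Then the function [u,v]_r := {u^r,v}, from F^*×F^* to K_2(2,F), is a Steinberg symbol; that is, for all t,u,v∈F^*: [tu,v]_r=[t,v]_r[u,v]_r, [t,uv]_r=[t,u]_r[t,v]_r, and [u,1-u]_r=1 whenever u≠1. -/
/-!
Common definitions: presentations of the abelian groups `K₂(F)`, `K₂(2,F)` and `K₂(A,F)`
(Rehmann–Morita).  "The abelian group generated by symbols subject to relations" is
formalized as the abelianization of the corresponding presented group.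
-/

variable (F : Type) [Field F]

/-- Relators for `K₂(F)`: the Steinberg symbol relations (A1)-(A3).
(A3) `{u, 1-u} = 1` (for `u ≠ 1`) is encoded as: for units `u, w` with `(w : F) = 1 - u`
(which forces `u ≠ 1`), `{u, w}` is a relator. -/
def K2Rels : Set (FreeGroup (Fˣ × Fˣ)) :=
  {r | (∃ t u v : Fˣ, r = FreeGroup.of (t * u, v) * (FreeGroup.of (t, v) * FreeGroup.of (u, v))⁻¹) ∨
       (∃ t u v : Fˣ, r = FreeGroup.of (t, u * v) * (FreeGroup.of (t, u) * FreeGroup.of (t, v))⁻¹) ∨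
       (∃ u w : Fˣ, (w : F) = 1 - (u : F) ∧ r = FreeGroup.of (u, w))}

/-- `K₂(F)`: the abelian group generated by the symbols `{u,v}`, `u v ∈ Fˣ`,
subject to the Steinberg symbol relations (A1)-(A3). -/
def K2 : Type := Abelianization (PresentedGroup (K2Rels F))

noncomputable instance : CommGroup (K2 F) := inferInstanceAs (CommGroup (Abelianization _))

/-- The Steinberg symbol `{u,v}` in `K₂(F)`. -/
def K2.sym (u v : Fˣ) : K2 F := Abelianization.of (PresentedGroup.of (u, v))

/-- The subgroup `m·K₂(F)` of `m`-th powers of elements of `K₂(F)`. -/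
noncomputable def K2.powSubgroup (m : ℕ) : Subgroup (K2 F) := Subgroup.closure {x | ∃ y : K2 F, x = y ^ m}

/-- Relators for `K₂(2,F)`: the Steinberg cocycle relations (B1)-(B4). -/
def K2SLRels : Set (FreeGroup (Fˣ × Fˣ)) :=
  {r | (∃ t u v : Fˣ, r = FreeGroup.of (t, u) * FreeGroup.of (t * u, v) *
          (FreeGroup.of (t, u * v) * FreeGroup.of (u, v))⁻¹) ∨
       (r = FreeGroup.of ((1 : Fˣ), (1 : Fˣ))) ∨
       (∃ u v : Fˣ, r = FreeGroup.of (u, v) * (FreeGroup.of (u⁻¹, v⁻¹))⁻¹) ∨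
       (∃ u v w : Fˣ, (w : F) = 1 - (u : F) ∧
          r = FreeGroup.of (u, v) * (FreeGroup.of (u, w * v))⁻¹)}

/-- `K₂(2,F)`: the abelian group generated by the symbols `{u,v}`, `u v ∈ Fˣ`,
subject to the Steinberg cocycle relations (B1)-(B4). -/
def K2SL : Type := Abelianization (PresentedGroup (K2SLRels F))

noncomputable instance : CommGroup (K2SL F) := inferInstanceAs (CommGroup (Abelianization _))

/-- The Steinberg cocycle `{u,v}` in `K₂(2,F)`. -/
def K2SL.sym (u v : Fˣ) : K2SL F := Abelianization.of (PresentedGroup.of (u, v))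

/-- The subgroup `m⟨{u²,v}⟩` of `K₂(2,F)` generated by the elements `{u²,v}^m`, `u v ∈ Fˣ`. -/
noncomputable def K2SL.sqSubgroup (m : ℤ) : Subgroup (K2SL F) :=
  Subgroup.closure {x | ∃ u v : Fˣ, x = (K2SL.sym F (u ^ 2) v) ^ m}

/-- A generalized Cartan matrix: `a_{ii} = 2`, off-diagonal entries `≤ 0`,
and `a_{ij} = 0 ↔ a_{ji} = 0`. -/
def IsGCM {n : ℕ} (A : Matrix (Fin n) (Fin n) ℤ) : Prop :=
  (∀ i, A i i = 2) ∧ (∀ i j, i ≠ j → A i j ≤ 0) ∧ (∀ i j, A i j = 0 ↔ A j i = 0)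

/-- Relators for `K₂(A,F)`: the Rehmann–Morita relations (L1)-(L7). -/
def K2ARels {n : ℕ} (A : Matrix (Fin n) (Fin n) ℤ) : Set (FreeGroup (Fin n × Fˣ × Fˣ)) :=
  {r | (∃ (i : Fin n) (t u v : Fˣ),
          r = FreeGroup.of (i, t, u) * FreeGroup.of (i, t * u, v) *
              (FreeGroup.of (i, t, u * v) * FreeGroup.of (i, u, v))⁻¹) ∨
       (∃ i : Fin n, r = FreeGroup.of (i, 1, 1)) ∨
       (∃ (i : Fin n) (u v : Fˣ),
          r = FreeGroup.of (i, u, v) * (FreeGroup.of (i, u⁻¹, v⁻¹))⁻¹) ∨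
       (∃ (i : Fin n) (u v w : Fˣ), (w : F) = 1 - (u : F) ∧
          r = FreeGroup.of (i, u, v) * (FreeGroup.of (i, u, w * v))⁻¹) ∨
       (∃ (i j : Fin n) (u v : Fˣ), i ≠ j ∧
          r = FreeGroup.of (i, u, v ^ (A j i)) * (FreeGroup.of (j, u ^ (A i j), v))⁻¹) ∨
       (∃ (i j : Fin n) (t u v : Fˣ), i ≠ j ∧
          r = FreeGroup.of (i, t * u, v ^ (A j i)) *
              (FreeGroup.of (i, t, v ^ (A j i)) * FreeGroup.of (i, u, v ^ (A j i)))⁻¹) ∨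
       (∃ (i j : Fin n) (t u v : Fˣ), i ≠ j ∧
          r = FreeGroup.of (i, t ^ (A j i), u * v) *
              (FreeGroup.of (i, t ^ (A j i), u) * FreeGroup.of (i, t ^ (A j i), v))⁻¹)}

/-- `K₂(A,F)`: the abelian group generated by the symbols `c_i(u,v)` subject to (L1)-(L7). -/
def K2A {n : ℕ} (A : Matrix (Fin n) (Fin n) ℤ) : Type :=
  Abelianization (PresentedGroup (K2ARels F A))

noncomputable instance {n : ℕ} (A : Matrix (Fin n) (Fin n) ℤ) : CommGroup (K2A F A) :=
  inferInstanceAs (CommGroup (Abelianization _))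

/-- The generator `c_i(u,v)` of `K₂(A,F)`. -/
def K2A.c {n : ℕ} (A : Matrix (Fin n) (Fin n) ℤ) (i : Fin n) (u v : Fˣ) : K2A F A :=
  Abelianization.of (PresentedGroup.of (i, u, v))

open scoped Classical in
/-- `LGroup F p` is `K₂(F)` when `p` holds and `K₂(2,F)` otherwise.  Taking
`p = "the i-th column of A has an odd entry"` gives the factor `L_i`. -/
noncomputable def LGroup (p : Prop) : Type :=
  Abelianization (PresentedGroup (if p then K2Rels F else K2SLRels F))

noncomputable instance (p : Prop) : CommGroup (LGroup F p) :=
  inferInstanceAs (CommGroup (Abelianization _))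

/-- The symbol `{u,v}` (Steinberg symbol resp. cocycle) in `LGroup F p`. -/
noncomputable def LGroup.sym (p : Prop) (u v : Fˣ) : LGroup F p :=
  Abelianization.of (PresentedGroup.of (u, v))

/-- Relators `x_i^{a_{ji}} = x_j^{a_{ij}}` (`i < j`) for the auxiliary abelian group `G`. -/
def GRels {n : ℕ} (A : Matrix (Fin n) (Fin n) ℤ) : Set (FreeGroup (Fin n)) :=
  {r | ∃ i j : Fin n, i < j ∧ r = FreeGroup.of i ^ (A j i) * (FreeGroup.of j ^ (A i j))⁻¹}

/-- The abelian group `G = ⟨x_1,…,x_n ∣ x_i^{a_{ji}} = x_j^{a_{ij}}, [x_i,x_j] = 1⟩`. -/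
def GGroup {n : ℕ} (A : Matrix (Fin n) (Fin n) ℤ) : Type :=
  Abelianization (PresentedGroup (GRels A))

noncomputable instance {n : ℕ} (A : Matrix (Fin n) (Fin n) ℤ) : CommGroup (GGroup A) :=
  inferInstanceAs (CommGroup (Abelianization _))

/-!
Write the cocycle additively, `c u v = {u, v}`. The cocycle identity (B1) alone, over the
commutative group `Fˣ`, makes the antisymmetrisation `⟨u, v⟩ = c u v - c v u` bimultiplicative.
The remaining relations first give `c u (-u * v) = c u v`, and from there `c u v = c v u⁻¹`;
this yields `c (u ^ 2) v = ⟨u, v⟩` and `⟨u, 1 - u⟩ = 0`. Hence for `r = 2k` the map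
`(u, v) ↦ c (u ^ r) v = k • ⟨u, v⟩` is a Steinberg symbol.
-/

variable {A : Type*} [AddCommGroup A]

section TwoCocycle

variable {G : Type*}

def skew (c : G → G → A) (u v : G) : A := c u v - c v u

theorem skew_swap (c : G → G → A) (u v : G) : skew c v u = -skew c u v :=
  (neg_sub _ _).symm

variable [CommGroup G]

def IsTwoCocycle (c : G → G → A) : Prop :=
  ∀ t u v, c t u + c (t * u) v = c t (u * v) + c u v

theorem IsTwoCocycle.skew_mul_left {c : G → G → A} (hc : IsTwoCocycle c) (u v w : G) :
    skew c (u * v) w = skew c u w + skew c v w := by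
  have h₁ := hc u v w
  have h₂ := hc w u v
  have h₃ := hc u w v
  rw [mul_comm v w] at h₁
  rw [mul_comm w u] at h₂
  unfold skew
  linear_combination (norm := abel) h₁ + h₂ - h₃

theorem IsTwoCocycle.skew_mul_right {c : G → G → A} (hc : IsTwoCocycle c) (u v w : G) :
    skew c u (v * w) = skew c u v + skew c u w := by
  rw [skew_swap, hc.skew_mul_left, neg_add, ← skew_swap, ← skew_swap]

end TwoCocycle

section Steinberg

variable {K : Type*} [Field K]

structure IsSteinbergSymbol (s : Kˣ → Kˣ → A) : Prop where
  map_mul_left : ∀ t u v, s (t * u) v = s t v + s u v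
  map_mul_right : ∀ t u v, s t (u * v) = s t u + s t v
  apply_one_sub : ∀ u w : Kˣ, (w : K) = 1 - u → s u w = 0

namespace IsSteinbergSymbol

variable {s : Kˣ → Kˣ → A}

theorem map_zpow_left (hs : IsSteinbergSymbol s) (k : ℤ) (u v : Kˣ) :
    s (u ^ k) v = k • s u v := by
  let f : Kˣ →* Multiplicative A :=
    MonoidHom.mk' (fun u ↦ .ofAdd (s u v)) fun a b ↦ by rw [hs.map_mul_left, ofAdd_add]
  exact congrArg Multiplicative.toAdd (map_zpow f u k)

theorem zsmul (hs : IsSteinbergSymbol s) (k : ℤ) : IsSteinbergSymbol fun u v ↦ k • s u v where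
  map_mul_left t u v := by rw [hs.map_mul_left, smul_add]
  map_mul_right t u v := by rw [hs.map_mul_right, smul_add]
  apply_one_sub u w hw := by rw [hs.apply_one_sub u w hw, smul_zero]

end IsSteinbergSymbol

/-- The relations (B1)-(B4), written additively. -/
structure IsSteinbergCocycle (c : Kˣ → Kˣ → A) : Prop where
  isTwoCocycle : IsTwoCocycle c
  apply_one_one : c 1 1 = 0
  apply_inv_inv : ∀ u v, c u⁻¹ v⁻¹ = c u v
  apply_one_sub_mul : ∀ u v w : Kˣ, (w : K) = 1 - u → c u (w * v) = c u v

namespace IsSteinbergCocycle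

variable {c : Kˣ → Kˣ → A}

theorem apply_one_left (hc : IsSteinbergCocycle c) (v : Kˣ) : c 1 v = 0 := by
  have h := hc.isTwoCocycle 1 1 v
  simp only [one_mul] at h
  rw [← add_right_cancel h, hc.apply_one_one]

theorem apply_one_right (hc : IsSteinbergCocycle c) (t : Kˣ) : c t 1 = 0 := by
  have h := hc.isTwoCocycle t 1 1
  simp only [mul_one] at h
  rw [add_left_cancel h, hc.apply_one_one]

theorem apply_neg_mul_right (hc : IsSteinbergCocycle c) (u v : Kˣ) : c u (-u * v) = c u v := by
  -- `(1 - u) / (1 - u⁻¹) = -u`, so (B4) at `u` and, through (B3), at `u⁻¹` combine to this.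
  rcases eq_or_ne u 1 with rfl | hu
  · rw [hc.apply_one_left, hc.apply_one_left]
  have hu' : (1 : K) - u ≠ 0 := sub_ne_zero.mpr fun h ↦ hu (Units.val_eq_one.mp h.symm)
  set w := Units.mk0 _ hu'
  have hw' : ((-w * u⁻¹ : Kˣ) : K) = 1 - (u⁻¹ : Kˣ) := by
    simp only [Units.val_mul, Units.val_neg, Units.val_inv_eq_inv_val, w, Units.val_mk0]
    field_simp
    ring
  calc c u (-u * v) = c u (w * ((-w * u⁻¹)⁻¹ * v)) := by
        congr 1; ext
        simp only [Units.val_mul, Units.val_neg, Units.val_inv_eq_inv_val, w, Units.val_mk0]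
        field_simp
    _ = c u⁻¹ ((-w * u⁻¹) * v⁻¹) := by
        rw [hc.apply_one_sub_mul _ _ _ rfl, ← hc.apply_inv_inv, mul_inv, inv_inv]
    _ = c u v := by rw [hc.apply_one_sub_mul _ _ _ hw', hc.apply_inv_inv]

theorem apply_sq_mul_right (hc : IsSteinbergCocycle c) (u v : Kˣ) : c u (u ^ 2 * v) = c u v := by
  rw [sq, ← neg_mul_neg u u, mul_assoc, hc.apply_neg_mul_right, hc.apply_neg_mul_right]

theorem apply_self_inv (hc : IsSteinbergCocycle c) (u : Kˣ) : c u u⁻¹ = c u u := by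
  rw [← hc.apply_sq_mul_right u u⁻¹, sq, mul_inv_cancel_right]

theorem apply_neg_one_right (hc : IsSteinbergCocycle c) (u : Kˣ) : c u (-1) = c u u := by
  rw [← hc.apply_neg_mul_right u (-1), neg_mul_neg, mul_one]

theorem add_apply_mul_self (hc : IsSteinbergCocycle c) (t u : Kˣ) :
    c t u + c (t * u) (t * u) = c t (-u) + c u u := by
  have h := hc.isTwoCocycle t u (-1)
  rwa [mul_neg_one, hc.apply_neg_one_right, hc.apply_neg_one_right] at h

theorem apply_sq_neg_right (hc : IsSteinbergCocycle c) (u v : Kˣ) :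
    c (u ^ 2) (-v) = c (u ^ 2) v := by
  have h₁ := hc.isTwoCocycle u u v
  have h₂ := hc.isTwoCocycle u u (-v)
  rw [← sq] at h₁ h₂
  rw [mul_neg, ← neg_mul, hc.apply_neg_mul_right, ← hc.apply_neg_mul_right u (-v),
    neg_mul_neg] at h₂
  linear_combination (norm := abel) h₂ - h₁

theorem apply_sq_mul_self (hc : IsSteinbergCocycle c) (u v : Kˣ) :
    c (u ^ 2 * v) (u ^ 2 * v) = c v v := by
  have h := hc.add_apply_mul_self (u ^ 2) v
  rw [hc.apply_sq_neg_right] at h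
  exact add_left_cancel h

theorem add_apply_mul_mul_self (hc : IsSteinbergCocycle c) (u v : Kˣ) :
    c u v + c (u * v) (u * v) = c u u + c v (-u⁻¹) := by
  have h := hc.isTwoCocycle u v (u * v)⁻¹
  rwa [hc.apply_self_inv, mul_inv_rev, mul_inv_cancel_left, hc.apply_self_inv,
    ← hc.apply_neg_mul_right v, neg_mul, mul_inv_cancel_left] at h

theorem apply_comm_inv (hc : IsSteinbergCocycle c) (u v : Kˣ) : c u v = c v u⁻¹ := by
  have h₁ := hc.add_apply_mul_mul_self u v
  have h₂ := hc.add_apply_mul_self v u⁻¹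
  rw [← hc.apply_sq_mul_self u (v * u⁻¹), hc.apply_inv_inv,
    show u ^ 2 * (v * u⁻¹) = u * v by rw [mul_comm v, ← mul_assoc, sq, mul_inv_cancel_right]] at h₂
  linear_combination (norm := abel) h₁ - h₂

theorem apply_sq_left (hc : IsSteinbergCocycle c) (u v : Kˣ) : c (u ^ 2) v = skew c u v := by
  have h₁ := hc.isTwoCocycle u u v
  have h₂ := hc.isTwoCocycle u u⁻¹ v
  rw [← sq] at h₁
  rw [mul_inv_cancel, hc.apply_one_left, hc.apply_self_inv, hc.apply_comm_inv u⁻¹ v, inv_inv,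
    ← hc.apply_sq_mul_right u (u⁻¹ * v), ← mul_assoc, sq, mul_inv_cancel_right] at h₂
  unfold skew
  linear_combination (norm := abel) h₁ - h₂

theorem skew_one_sub (hc : IsSteinbergCocycle c) {u w : Kˣ} (hw : (w : K) = 1 - u) :
    skew c u w = 0 := by
  have h₁ := hc.apply_one_sub_mul u 1 w hw
  have h₂ := hc.apply_one_sub_mul u w⁻¹ w hw
  rw [mul_one, hc.apply_one_right] at h₁
  rw [mul_inv_cancel, hc.apply_one_right] at h₂
  rw [skew, hc.apply_comm_inv w u, h₁, ← h₂, sub_zero]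

theorem isSteinbergSymbol_skew (hc : IsSteinbergCocycle c) : IsSteinbergSymbol (skew c) where
  map_mul_left := hc.isTwoCocycle.skew_mul_left
  map_mul_right := hc.isTwoCocycle.skew_mul_right
  apply_one_sub _ _ := hc.skew_one_sub

theorem isSteinbergSymbol_zpow_left (hc : IsSteinbergCocycle c) {r : ℤ} (hr : Even r) :
    IsSteinbergSymbol fun u v ↦ c (u ^ r) v := by
  obtain ⟨k, rfl⟩ := hr
  have h : (fun u v ↦ c (u ^ (k + k)) v) = fun u v ↦ k • skew c u v := by
    funext u v
    rw [zpow_add, ← sq, hc.apply_sq_left, hc.isSteinbergSymbol_skew.map_zpow_left]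
  rw [h]
  exact hc.isSteinbergSymbol_skew.zsmul k

end IsSteinbergCocycle

end Steinberg

theorem K2SL.isSteinbergCocycle :
    IsSteinbergCocycle fun u v : Fˣ ↦ Additive.ofMul (K2SL.sym F u v) where
  isTwoCocycle t u v := congrArg Abelianization.of <|
    PresentedGroup.mk_eq_mk_of_mul_inv_mem (Or.inl ⟨t, u, v, rfl⟩)
  apply_one_one := congrArg Abelianization.of <| PresentedGroup.one_of_mem (Or.inr (Or.inl rfl))
  apply_inv_inv u v := congrArg Abelianization.of <| Eq.symm <|
    PresentedGroup.mk_eq_mk_of_mul_inv_mem (Or.inr (Or.inr (Or.inl ⟨u, v, rfl⟩)))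
  apply_one_sub_mul u v w hw := congrArg Abelianization.of <| Eq.symm <|
    PresentedGroup.mk_eq_mk_of_mul_inv_mem (Or.inr (Or.inr (Or.inr ⟨u, v, w, hw, rfl⟩)))

/-- For an even integer `r`, the map `[u,v]_r := {u^r, v}` from `Fˣ × Fˣ` to `K₂(2,F)`
is a Steinberg symbol: it is bimultiplicative and `[u, 1-u]_r = 1` whenever `u ≠ 1`
(encoded: `[u, w]_r = 1` whenever `w` is a unit with `(w : F) = 1 - u`). -/
theorem K2SL.pow_steinberg_symbol (F : Type) [Field F] (r : ℤ) (hr : Even r) :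
    (∀ t u v : Fˣ,
      K2SL.sym F ((t * u) ^ r) v = K2SL.sym F (t ^ r) v * K2SL.sym F (u ^ r) v) ∧
    (∀ t u v : Fˣ,
      K2SL.sym F (t ^ r) (u * v) = K2SL.sym F (t ^ r) u * K2SL.sym F (t ^ r) v) ∧
    (∀ u w : Fˣ, (w : F) = 1 - (u : F) → K2SL.sym F (u ^ r) w = 1) := by
  have hs := (K2SL.isSteinbergCocycle F).isSteinbergSymbol_zpow_left hr
  exact ⟨hs.map_mul_left, hs.map_mul_right, hs.apply_one_sub⟩
end

section
/- Let F be a field and let r be any integer. Then the function [u,v]_r := {u^r,v}, from F^*×F^* to K_2(2,F), is a Steinberg cocycle; that is, for all t,u,v∈F^*: [t,u]_r[tu,v]_r=[t,uv]_r[u,v]_r, [1,1]_r=1, [u,v]_r=[u^{-1},v^{-1}]_r, and [u,v]_r=[u,(1-u)v]_r whenever u≠1. -/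
/-!
Common definitions: presentations of the abelian groups `K₂(F)`, `K₂(2,F)` and `K₂(A,F)`
(Rehmann–Morita).  "The abelian group generated by symbols subject to relations" is
formalized as the abelianization of the corresponding presented group.
-/

variable (F : Type) [Field F]

/-!
The argument works for a Steinberg cocycle `c` with values in any abelian group. For fixed `w`,
the `a` with `c a (w * v) = c a v` for all `v` form a subgroup of `Fˣ`; this gives (B4) for
`c (u ^ r) ·`. The axioms force `c u (-u) = 0`, hence `c u (v ^ 2) = c u v - c v u`, and this
skew pairing is bimultiplicative for any 2-cocycle on an abelian group. So `c` is additive in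
each argument once the first one is a square, and writing `r = 2 s` or `r = 2 s + 1` reduces
(B1) for `c (· ^ r) ·` to (B1) for `c`.
-/

/- Values are written additively; `K2SL F` enters as `Additive (K2SL F)`, whose operations are
definitionally those of `K2SL F`. -/
structure IsSteinbergCocycle_s6 (K : Type*) [Field K] {A : Type*} [AddCommGroup A]
    (c : Kˣ → Kˣ → A) : Prop where
  cocycle : ∀ t u v, c t u + c (t * u) v = c t (u * v) + c u v
  one_one : c 1 1 = 0
  inv : ∀ u v, c u v = c u⁻¹ v⁻¹
  one_sub : ∀ u v w : Kˣ, (w : K) = 1 - u → c u v = c u (w * v)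

namespace IsSteinbergCocycle_s6

variable {K : Type*} [Field K] {A : Type*} [AddCommGroup A] {c : Kˣ → Kˣ → A}
  (hc : IsSteinbergCocycle_s6 K c)
include hc

theorem one_left (v : Kˣ) : c 1 v = 0 := by
  have h := hc.cocycle 1 1 v
  simp only [one_mul, hc.one_one] at h
  linear_combination (norm := abel) -h

theorem one_right (u : Kˣ) : c u 1 = 0 := by
  have h := hc.cocycle u 1 1
  simp only [mul_one, hc.one_one] at h
  linear_combination (norm := abel) h

theorem one_sub_inv {u w : Kˣ} (hw : (w : K) = 1 - (u : K)⁻¹) (v : Kˣ) :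
    c u (w⁻¹ * v) = c u v := by
  rw [hc.inv u v, hc.one_sub u⁻¹ v⁻¹ w (by rwa [Units.val_inv_eq_inv_val]), hc.inv u,
    mul_inv_rev, inv_inv, mul_comm]

theorem neg_mul_right (u v : Kˣ) : c u (-u * v) = c u v := by
  by_cases hu : u = 1
  · rw [hu, hc.one_left, hc.one_left]
  have hu' : (u : K) ≠ 1 := by rwa [Ne, Units.val_eq_one]
  have h₁ : 1 - (u : K) ≠ 0 := sub_ne_zero.mpr hu'.symm
  have h₂ : 1 - (u : K)⁻¹ ≠ 0 := sub_ne_zero.mpr (by rwa [ne_comm, inv_ne_one])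
  have hneg : -u * Units.mk0 _ h₂ = Units.mk0 _ h₁ := by ext; simp [mul_sub]
  rw [eq_mul_inv_of_mul_eq hneg, mul_assoc, ← hc.one_sub u _ _ rfl, hc.one_sub_inv rfl]

theorem neg_right_self (u : Kˣ) : c u (-u) = 0 := by
  simpa [hc.one_right] using hc.neg_mul_right u 1

theorem sq_right (u v : Kˣ) : c u (v ^ 2) = c u v - c v u := by
  have h := hc.cocycle u v (-(u * v))
  rw [hc.neg_right_self, show v * -(u * v) = -u * v ^ 2 by ext; simp; ring,
    show -(u * v) = -v * u by ext; simp; ring, hc.neg_mul_right, hc.neg_mul_right] at h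
  linear_combination (norm := abel) -h

theorem skew_mul_left (u v w : Kˣ) :
    c (u * v) w - c w (u * v) = c u w - c w u + (c v w - c w v) := by
  have h₁ := hc.cocycle u v w
  have h₂ := hc.cocycle w u v
  have h₃ := hc.cocycle u w v
  rw [mul_comm v w] at h₁
  rw [mul_comm w u] at h₂
  linear_combination (norm := abel) h₁ + h₂ - h₃

theorem mul_sq_right (y a v : Kˣ) : c y (a * v ^ 2) = c y a + c y (v ^ 2) := by
  have h := hc.cocycle y a (v ^ 2)
  rw [hc.sq_right, hc.sq_right, hc.skew_mul_left] at h
  rw [hc.sq_right]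
  linear_combination (norm := abel) -h

theorem sq_mul_left (v a x : Kˣ) : c (v ^ 2 * a) x = c (v ^ 2) x + c a x := by
  have h := hc.skew_mul_left (v ^ 2) a x
  rw [mul_comm (v ^ 2) a, hc.mul_sq_right] at h
  rw [mul_comm]
  linear_combination (norm := abel) h

theorem sq_left_mul_right (v y z : Kˣ) : c (v ^ 2) (y * z) = c (v ^ 2) y + c (v ^ 2) z := by
  have h := hc.cocycle (v ^ 2) y z
  rw [hc.sq_mul_left] at h
  linear_combination (norm := abel) -h

def invariantSubgroup (w : Kˣ) : Subgroup Kˣ where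
  carrier := {a | ∀ v, c a (w * v) = c a v}
  one_mem' v := by rw [hc.one_left, hc.one_left]
  mul_mem' {a b} ha hb y := by
    have h₁ := hc.cocycle a b (w * y)
    have h₂ := hc.cocycle a b y
    rw [mul_left_comm, ha, hb] at h₁
    linear_combination (norm := abel) h₁ - h₂
  inv_mem' {a} ha v := by
    rw [hc.inv, hc.inv a⁻¹, inv_inv, mul_inv_rev, mul_comm, ← ha, mul_inv_cancel_left]

theorem mem_invariantSubgroup_one_sub {u w : Kˣ} (hw : (w : K) = 1 - u) :
    u ∈ hc.invariantSubgroup w :=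
  fun v => (hc.one_sub u v w hw).symm

theorem comp_zpow (r : ℤ) : IsSteinbergCocycle_s6 K (fun u v => c (u ^ r) v) where
  cocycle t u v := by
    have hsq (x : Kˣ) (s : ℤ) : x ^ (2 * s) = (x ^ s) ^ 2 := by rw [zpow_mul', zpow_ofNat]
    simp only [mul_zpow]
    obtain ⟨s, rfl | rfl⟩ := Int.even_or_odd' r
    · rw [hsq t, hsq u, hc.sq_mul_left, hc.sq_left_mul_right]
      abel
    · have h := hc.cocycle (t ^ (2 * s + 1)) u v
      rw [zpow_add_one u, hsq u, mul_left_comm, hc.sq_mul_left, hc.sq_mul_left]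
      linear_combination (norm := abel) h
  one_one := by simpa using hc.one_one
  inv u v := by simpa using hc.inv (u ^ r) v
  one_sub u v w hw := (zpow_mem (hc.mem_invariantSubgroup_one_sub hw) r v).symm

end IsSteinbergCocycle_s6

theorem K2SL.isSteinbergCocycle_sym :
    IsSteinbergCocycle_s6 F (fun u v => Additive.ofMul (K2SL.sym F u v)) where
  cocycle t u v := congrArg Abelianization.of
    (PresentedGroup.mk_eq_mk_of_mul_inv_mem (Or.inl ⟨t, u, v, rfl⟩))
  one_one := congrArg Abelianization.of (PresentedGroup.one_of_mem (Or.inr (Or.inl rfl)))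
  inv u v := congrArg Abelianization.of
    (PresentedGroup.mk_eq_mk_of_mul_inv_mem (Or.inr (Or.inr (Or.inl ⟨u, v, rfl⟩))))
  one_sub u v w hw := congrArg Abelianization.of
    (PresentedGroup.mk_eq_mk_of_mul_inv_mem (Or.inr (Or.inr (Or.inr ⟨u, v, w, hw, rfl⟩))))

/-- For any integer `r`, the map `[u,v]_r := {u^r, v}` from `Fˣ × Fˣ` to `K₂(2,F)`
is a Steinberg cocycle: `[t,u]_r[tu,v]_r = [t,uv]_r[u,v]_r`, `[1,1]_r = 1`,
`[u,v]_r = [u⁻¹,v⁻¹]_r`, and `[u,v]_r = [u,(1-u)v]_r` whenever `u ≠ 1`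
(encoded via a unit `w` with `(w : F) = 1 - u`). -/
theorem K2SL.pow_steinberg_cocycle (F : Type) [Field F] (r : ℤ) :
    (∀ t u v : Fˣ,
      K2SL.sym F (t ^ r) u * K2SL.sym F ((t * u) ^ r) v =
        K2SL.sym F (t ^ r) (u * v) * K2SL.sym F (u ^ r) v) ∧
    (K2SL.sym F ((1 : Fˣ) ^ r) 1 = 1) ∧
    (∀ u v : Fˣ, K2SL.sym F (u ^ r) v = K2SL.sym F ((u⁻¹) ^ r) v⁻¹) ∧
    (∀ u v w : Fˣ, (w : F) = 1 - (u : F) →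
      K2SL.sym F (u ^ r) v = K2SL.sym F (u ^ r) (w * v)) := by
  have h := (K2SL.isSteinbergCocycle_sym F).comp_zpow r
  exact ⟨h.cocycle, h.one_one, h.inv, h.one_sub⟩
end

section
/- Let a,b be positive odd integers, let A be the 2×2 generalized Cartan matrix with rows (2,−b) and (−a,2), let F be a field, and let h=gcd(a,b). Then K_2(A,F) is isomorphic to (K_2(F)/hK_2(F)) × K_2(F). -/
/-!
Common definitions: presentations of the abelian groups `K₂(F)`, `K₂(2,F)` and `K₂(A,F)`
(Rehmann–Morita).  "The abelian group generated by symbols subject to relations" is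
formalized as the abelianization of the corresponding presented group.
-/

variable (F : Type) [Field F]

/-!
Each family `c_i` of generators of `K₂(A,F)` satisfies (L1)–(L4), the Steinberg cocycle
relations. For such a cocycle `c`, `c(x, v²) = c(v, x⁻¹) c(x⁻¹, v)⁻¹` is given by the commutator
pairing, which is bimultiplicative; (L6) makes `c_i(·, v^k)` multiplicative for the odd entry
`k = a_{ji}`, and `v = z² v^k` for `z = v^{-(k-1)/2}`, so `c_i` is bimultiplicative, i.e. a
Steinberg symbol. Hence `K₂(A,F)` is generated by two copies `ι₀, ι₁` of `K₂(F)`, and (L5) says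
that the only relation between them is `ι₀(x)^a = ι₁(x)^b`. Writing `a = h a'`, `b = h b'` with
`p a' + q b' = 1`, the maps `ι₀ x ↦ (x^p mod h, x^{b'})`, `ι₁ x ↦ (x^{-q} mod h, x^{a'})`
identify this group with `K₂(F)/hK₂(F) × K₂(F)`.
-/

namespace PresentedGroup

variable {α : Type*} {rels : Set (FreeGroup α)} {N : Type*} [CommGroup N]

noncomputable def abelianizationLift (f : α → N) (h : ∀ r ∈ rels, FreeGroup.lift f r = 1) :
    Abelianization (PresentedGroup rels) →* N :=
  Abelianization.lift (toGroup h)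

@[simp]
theorem abelianizationLift_of (f : α → N) (h : ∀ r ∈ rels, FreeGroup.lift f r = 1) (x : α) :
    abelianizationLift f h (Abelianization.of (of x)) = f x := by
  simp [abelianizationLift]

theorem abelianization_hom_ext {φ ψ : Abelianization (PresentedGroup rels) →* N}
    (h : ∀ x, φ (Abelianization.of (of x)) = ψ (Abelianization.of (of x))) : φ = ψ :=
  Abelianization.hom_ext _ _ (ext h)

end PresentedGroup

section SteinbergCocycle

variable {F} {M : Type*} [CommGroup M]

/-- The relations (B1)–(B4) defining `K2SL`. -/
structure IsSteinbergCocycle_s10 (c : Fˣ → Fˣ → M) : Prop where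
  cocycle : ∀ t u v, c t u * c (t * u) v = c t (u * v) * c u v
  apply_one_one : c 1 1 = 1
  apply_inv_inv : ∀ u v, c u⁻¹ v⁻¹ = c u v
  apply_one_sub_mul : ∀ u w v : Fˣ, (w : F) = 1 - u → c u (w * v) = c u v

def commPairing (c : Fˣ → Fˣ → M) (x y : Fˣ) : M := c x y * (c y x)⁻¹

theorem inv_commPairing (c : Fˣ → Fˣ → M) (x y : Fˣ) :
    (commPairing c x y)⁻¹ = commPairing c y x := by
  rw [commPairing, commPairing, mul_inv, inv_inv, mul_comm]

namespace IsSteinbergCocycle_s10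

variable {c : Fˣ → Fˣ → M}

theorem of_mul (hl : ∀ t u v, c (t * u) v = c t v * c u v)
    (hr : ∀ t u v, c t (u * v) = c t u * c t v) (h : ∀ u w : Fˣ, (w : F) = 1 - u → c u w = 1) :
    IsSteinbergCocycle_s10 c where
  cocycle t u v := by rw [hl, hr, mul_assoc]
  apply_one_one := by simpa using hl 1 1 1
  apply_inv_inv u v := by
    have hl' : c u⁻¹ v⁻¹ = (c u v⁻¹)⁻¹ := map_inv (MonoidHom.mk' (c · v⁻¹) (hl · · v⁻¹)) u
    have hr' : c u v⁻¹ = (c u v)⁻¹ := map_inv (MonoidHom.mk' (c u) (hr u)) v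
    rw [hl', hr', inv_inv]
  apply_one_sub_mul u w v hw := by rw [hr, h u w hw, one_mul]

theorem one_left_s10 (hc : IsSteinbergCocycle_s10 c) (v : Fˣ) : c 1 v = 1 := by
  have h := hc.cocycle 1 1 v
  simp only [one_mul] at h
  rw [← mul_right_cancel h, hc.apply_one_one]

theorem one_right_s10 (hc : IsSteinbergCocycle_s10 c) (t : Fˣ) : c t 1 = 1 := by
  have h := hc.cocycle t 1 1
  simp only [mul_one] at h
  rw [mul_left_cancel h, hc.apply_one_one]

theorem apply_one_sub (hc : IsSteinbergCocycle_s10 c) (u w : Fˣ) (hw : (w : F) = 1 - u) :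
    c u w = 1 := by
  simpa only [mul_one, hc.one_right_s10] using hc.apply_one_sub_mul u w 1 hw

theorem apply_neg_mul (hc : IsSteinbergCocycle_s10 c) (u v : Fˣ) : c u (-u * v) = c u v := by
  rcases eq_or_ne u 1 with rfl | hu
  · rw [hc.one_left_s10, hc.one_left_s10]
  have hw : (1 : F) - u ≠ 0 := sub_ne_zero.2 fun h => hu (Units.ext h.symm)
  have hw' : (1 : F) - ↑u⁻¹ ≠ 0 := sub_ne_zero.2 fun h => hu (inv_eq_one.1 (Units.ext h.symm))
  set w := Units.mk0 _ hw
  set w' := Units.mk0 _ hw'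
  have hww' : w = -u * w' := by
    ext
    simp [w, w', mul_sub]
  calc c u (-u * v) = c u (w * (w'⁻¹ * v)) := by rw [hww', mul_assoc, mul_inv_cancel_left]
    _ = c u (w'⁻¹ * v) := hc.apply_one_sub_mul u w _ rfl
    _ = c u⁻¹ (w' * v⁻¹) := by rw [← hc.apply_inv_inv u, mul_inv, inv_inv]
    _ = c u⁻¹ v⁻¹ := hc.apply_one_sub_mul u⁻¹ w' _ rfl
    _ = c u v := hc.apply_inv_inv u v

theorem apply_neg_inv (hc : IsSteinbergCocycle_s10 c) (u : Fˣ) : c u (-u⁻¹) = 1 := by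
  rw [← hc.apply_neg_mul u, neg_mul_neg, mul_inv_cancel, hc.one_right_s10]

theorem apply_eq_apply_inv (hc : IsSteinbergCocycle_s10 c) (u v : Fˣ) : c u v = c v u⁻¹ := by
  have h := hc.cocycle u v (-(u * v)⁻¹)
  have e₁ : v * -(u * v)⁻¹ = -u⁻¹ := by rw [mul_neg, mul_inv_rev, mul_inv_cancel_left]
  have e₂ : -v * -(u * v)⁻¹ = u⁻¹ := by rw [neg_mul_neg, mul_inv_rev, mul_inv_cancel_left]
  rw [hc.apply_neg_inv, mul_one, e₁, hc.apply_neg_inv, one_mul] at h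
  rw [h, ← hc.apply_neg_mul v, e₂]

theorem apply_neg_mul_apply (hc : IsSteinbergCocycle_s10 c) (t v : Fˣ) :
    c t (-v) * c v t = c t (-1) := by
  have h := hc.cocycle t (-v) v⁻¹
  have e : c (t * -v) v⁻¹ = c v t := by
    rw [hc.apply_eq_apply_inv, mul_inv_rev, inv_neg, hc.apply_neg_mul, hc.apply_inv_inv]
  have e' : c (-v) v⁻¹ = 1 := by simpa using hc.apply_neg_inv (-v)
  rwa [e, neg_mul, mul_inv_cancel, e', mul_one] at h

theorem apply_mul_self_left (hc : IsSteinbergCocycle_s10 c) (t v : Fˣ) :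
    c (t * t) v = commPairing c t v := by
  have h := hc.cocycle t t v
  have e : c t t = c t (-1) := by simpa using hc.apply_neg_mul t (-1)
  have e' : c t (t * v) = c t (-1) * (c v t)⁻¹ := by
    rw [← neg_mul_neg t v, hc.apply_neg_mul]
    exact eq_mul_inv_of_mul_eq (hc.apply_neg_mul_apply t v)
  rw [e, e', mul_assoc] at h
  rw [mul_left_cancel h, commPairing, mul_comm]

theorem commPairing_mul_left (hc : IsSteinbergCocycle_s10 c) (t u v : Fˣ) :
    commPairing c (t * u) v = commPairing c t v * commPairing c u v := by
  have f₁ : c (t * u) v = (c t u)⁻¹ * (c t (u * v) * c u v) :=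
    eq_inv_mul_of_mul_eq (hc.cocycle t u v)
  have f₂ : c v (t * u) = (c t u)⁻¹ * (c v t * c (v * t) u) := by
    rw [eq_inv_mul_iff_mul_eq, mul_comm (c t u)]
    exact (hc.cocycle v t u).symm
  have f₃ : c (t * v) u = (c t v)⁻¹ * (c t (v * u) * c v u) :=
    eq_inv_mul_of_mul_eq (hc.cocycle t v u)
  rw [commPairing, commPairing, commPairing, f₁, f₂, mul_comm v t, f₃, mul_comm v u]
  apply Additive.ofMul.injective
  simp only [ofMul_mul, ofMul_inv]
  abel

theorem commPairing_mul_right (hc : IsSteinbergCocycle_s10 c) (v x y : Fˣ) :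
    commPairing c v (x * y) = commPairing c v x * commPairing c v y := by
  rw [← inv_commPairing, hc.commPairing_mul_left, mul_inv, inv_commPairing, inv_commPairing]

theorem apply_mul_self_right (hc : IsSteinbergCocycle_s10 c) (x v : Fˣ) :
    c x (v * v) = commPairing c v x⁻¹ := by
  rw [hc.apply_eq_apply_inv, hc.apply_mul_self_left]

theorem apply_mul_self_right_mul_left (hc : IsSteinbergCocycle_s10 c) (x y v : Fˣ) :
    c (x * y) (v * v) = c x (v * v) * c y (v * v) := by
  rw [hc.apply_mul_self_right, hc.apply_mul_self_right, hc.apply_mul_self_right, mul_inv,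
    hc.commPairing_mul_right]

theorem apply_mul_right_of_mul_left (hc : IsSteinbergCocycle_s10 c) {w : Fˣ}
    (hw : ∀ x y, c (x * y) w = c x w * c y w) (t x : Fˣ) : c t (x * w) = c t x * c t w := by
  have h := hc.cocycle t x w
  rw [hw, ← mul_assoc] at h
  exact (mul_right_cancel h).symm

theorem apply_mul_right_of_odd (hc : IsSteinbergCocycle_s10 c) {k : ℤ} (hk : Odd k)
    (h : ∀ x y v, c (x * y) (v ^ k) = c x (v ^ k) * c y (v ^ k)) (t u v : Fˣ) :
    c t (u * v) = c t u * c t v := by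
  obtain ⟨m, rfl⟩ := hk
  -- `v = z² v^k`, and both `c(·, z²)` and `c(·, v^k)` are multiplicative in the first slot
  set z := v ^ (-m)
  have hv : z * z * v ^ (2 * m + 1) = v := by
    rw [← zpow_add, ← zpow_add, show -m + -m + (2 * m + 1) = 1 by ring, zpow_one]
  have hk := hc.apply_mul_right_of_mul_left (h · · v)
  have h2 := hc.apply_mul_right_of_mul_left (hc.apply_mul_self_right_mul_left · · z)
  rw [← hv, ← mul_assoc, hk, h2, mul_assoc, ← hk, hv]

theorem apply_mul_left_of_odd (hc : IsSteinbergCocycle_s10 c) {k : ℤ} (hk : Odd k)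
    (h : ∀ x y v, c (x * y) (v ^ k) = c x (v ^ k) * c y (v ^ k)) (t u v : Fˣ) :
    c (t * u) v = c t v * c u v := by
  have h' := hc.cocycle t u v
  rw [hc.apply_mul_right_of_odd hk h, mul_assoc] at h'
  exact mul_left_cancel h'

end IsSteinbergCocycle_s10

end SteinbergCocycle

namespace K2

theorem sym_mul_left (t u v : Fˣ) : sym F (t * u) v = sym F t v * sym F u v := by
  have h := congrArg Abelianization.of
    (PresentedGroup.mk_eq_mk_of_mul_inv_mem (rels := K2Rels F) (Or.inl ⟨t, u, v, rfl⟩))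
  simp only [map_mul] at h
  exact h

theorem sym_mul_right (t u v : Fˣ) : sym F t (u * v) = sym F t u * sym F t v := by
  have h := congrArg Abelianization.of
    (PresentedGroup.mk_eq_mk_of_mul_inv_mem (rels := K2Rels F) (Or.inr (Or.inl ⟨t, u, v, rfl⟩)))
  simp only [map_mul] at h
  exact h

theorem sym_one_sub (u w : Fˣ) (hw : (w : F) = 1 - u) : sym F u w = 1 := by
  have h := congrArg Abelianization.of
    (PresentedGroup.one_of_mem (rels := K2Rels F) (Or.inr (Or.inr ⟨u, w, hw, rfl⟩)))
  rwa [map_one] at h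

theorem sym_zpow_left (u v : Fˣ) (n : ℤ) : sym F (u ^ n) v = sym F u v ^ n :=
  map_zpow (MonoidHom.mk' (sym F · v) (sym_mul_left F · · v)) u n

theorem sym_zpow_right (u v : Fˣ) (n : ℤ) : sym F u (v ^ n) = sym F u v ^ n :=
  map_zpow (MonoidHom.mk' (sym F u) (sym_mul_right F u)) v n

variable {N : Type*} [CommGroup N]

noncomputable def lift (f : Fˣ → Fˣ → N) (hl : ∀ t u v, f (t * u) v = f t v * f u v)
    (hr : ∀ t u v, f t (u * v) = f t u * f t v) (h : ∀ u w : Fˣ, (w : F) = 1 - u → f u w = 1) :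
    K2 F →* N :=
  PresentedGroup.abelianizationLift (fun x => f x.1 x.2) (by
    rintro r (⟨t, u, v, rfl⟩ | ⟨t, u, v, rfl⟩ | ⟨u, w, hw, rfl⟩) <;>
      simp only [map_mul, map_inv, FreeGroup.lift_apply_of, mul_inv_eq_one]
    exacts [hl t u v, hr t u v, h u w hw])

@[simp]
theorem lift_sym (f : Fˣ → Fˣ → N) (hl : ∀ t u v, f (t * u) v = f t v * f u v)
    (hr : ∀ t u v, f t (u * v) = f t u * f t v) (h : ∀ u w : Fˣ, (w : F) = 1 - u → f u w = 1)
    (u v : Fˣ) : lift F f hl hr h (sym F u v) = f u v :=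
  PresentedGroup.abelianizationLift_of _ _ (u, v)

theorem hom_ext {φ ψ : K2 F →* N} (h : ∀ u v, φ (sym F u v) = ψ (sym F u v)) : φ = ψ :=
  PresentedGroup.abelianization_hom_ext fun x => h x.1 x.2

theorem isSteinbergCocycle_map_sym (θ : K2 F →* N) :
    IsSteinbergCocycle_s10 fun u v => θ (sym F u v) :=
  .of_mul (fun t u v => by rw [sym_mul_left, map_mul])
    (fun t u v => by rw [sym_mul_right, map_mul])
    (fun u w hw => by rw [sym_one_sub F u w hw, map_one])

end K2

namespace K2A

variable {n : ℕ} (A : Matrix (Fin n) (Fin n) ℤ)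

theorem isSteinbergCocycle_c (i : Fin n) : IsSteinbergCocycle_s10 (c F A i) where
  cocycle t u v := by
    have h := congrArg Abelianization.of
      (PresentedGroup.mk_eq_mk_of_mul_inv_mem (rels := K2ARels F A) (Or.inl ⟨i, t, u, v, rfl⟩))
    simp only [map_mul] at h
    exact h
  apply_one_one := by
    have h := congrArg Abelianization.of
      (PresentedGroup.one_of_mem (rels := K2ARels F A) (Or.inr (Or.inl ⟨i, rfl⟩)))
    rwa [map_one] at h
  apply_inv_inv u v := (congrArg Abelianization.of (PresentedGroup.mk_eq_mk_of_mul_inv_mem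
    (rels := K2ARels F A) (Or.inr (Or.inr (Or.inl ⟨i, u, v, rfl⟩))))).symm
  apply_one_sub_mul u w v hw := (congrArg Abelianization.of (PresentedGroup.mk_eq_mk_of_mul_inv_mem
    (rels := K2ARels F A) (Or.inr (Or.inr (Or.inr (Or.inl ⟨i, u, v, w, hw, rfl⟩)))))).symm

theorem c_zpow_right {i j : Fin n} (hij : i ≠ j) (u v : Fˣ) :
    c F A i u (v ^ A j i) = c F A j (u ^ A i j) v :=
  congrArg Abelianization.of (PresentedGroup.mk_eq_mk_of_mul_inv_mem (rels := K2ARels F A)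
    (Or.inr (Or.inr (Or.inr (Or.inr (Or.inl ⟨i, j, u, v, hij, rfl⟩))))))

theorem c_mul_left_zpow_right {i j : Fin n} (hij : i ≠ j) (t u v : Fˣ) :
    c F A i (t * u) (v ^ A j i) = c F A i t (v ^ A j i) * c F A i u (v ^ A j i) := by
  have h := congrArg Abelianization.of (PresentedGroup.mk_eq_mk_of_mul_inv_mem
    (rels := K2ARels F A) (Or.inr (Or.inr (Or.inr (Or.inr (Or.inr (Or.inl
      ⟨i, j, t, u, v, hij, rfl⟩)))))))
  simp only [map_mul] at h
  exact h

theorem c_mul_left {i j : Fin n} (hij : i ≠ j) (hodd : Odd (A j i)) (t u v : Fˣ) :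
    c F A i (t * u) v = c F A i t v * c F A i u v :=
  (isSteinbergCocycle_c F A i).apply_mul_left_of_odd hodd (c_mul_left_zpow_right F A hij) t u v

theorem c_mul_right {i j : Fin n} (hij : i ≠ j) (hodd : Odd (A j i)) (t u v : Fˣ) :
    c F A i t (u * v) = c F A i t u * c F A i t v :=
  (isSteinbergCocycle_c F A i).apply_mul_right_of_odd hodd (c_mul_left_zpow_right F A hij) t u v

noncomputable def symHom {i j : Fin n} (hij : i ≠ j) (hodd : Odd (A j i)) : K2 F →* K2A F A :=
  K2.lift F (c F A i) (c_mul_left F A hij hodd) (c_mul_right F A hij hodd)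
    (isSteinbergCocycle_c F A i).apply_one_sub

@[simp]
theorem symHom_sym {i j : Fin n} (hij : i ≠ j) (hodd : Odd (A j i)) (u v : Fˣ) :
    symHom F A hij hodd (K2.sym F u v) = c F A i u v :=
  K2.lift_sym F _ _ _ _ u v

theorem symHom_zpow_eq {i j : Fin n} (hij : i ≠ j) (hi : Odd (A j i)) (hj : Odd (A i j))
    (x : K2 F) : symHom F A hij hi x ^ A j i = symHom F A hij.symm hj x ^ A i j := by
  suffices (zpowGroupHom (A j i)).comp (symHom F A hij hi) =
      (zpowGroupHom (A i j)).comp (symHom F A hij.symm hj) from DFunLike.congr_fun this x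
  refine K2.hom_ext F fun u v => ?_
  simp only [MonoidHom.comp_apply, zpowGroupHom_apply]
  rw [← map_zpow, ← map_zpow, ← K2.sym_zpow_right, ← K2.sym_zpow_left, symHom_sym, symHom_sym,
    c_zpow_right F A hij]

variable {N : Type*} [CommGroup N]

noncomputable def lift (θ : Fin n → K2 F →* N)
    (hθ : ∀ i j, i ≠ j → ∀ x, θ i x ^ A j i = θ j x ^ A i j) : K2A F A →* N :=
  PresentedGroup.abelianizationLift (fun x => θ x.1 (K2.sym F x.2.1 x.2.2)) (by
    rintro r (⟨i, t, u, v, rfl⟩ | ⟨i, rfl⟩ | ⟨i, u, v, rfl⟩ | ⟨i, u, v, w, hw, rfl⟩ |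
      ⟨i, j, u, v, hij, rfl⟩ | ⟨i, j, t, u, v, hij, rfl⟩ | ⟨i, j, t, u, v, hij, rfl⟩) <;>
      simp only [map_mul, map_inv, FreeGroup.lift_apply_of, mul_inv_eq_one]
    · exact (K2.isSteinbergCocycle_map_sym F (θ i)).cocycle t u v
    · exact (K2.isSteinbergCocycle_map_sym F (θ i)).apply_one_one
    · exact ((K2.isSteinbergCocycle_map_sym F (θ i)).apply_inv_inv u v).symm
    · exact ((K2.isSteinbergCocycle_map_sym F (θ i)).apply_one_sub_mul u w v hw).symm
    · rw [K2.sym_zpow_right, K2.sym_zpow_left, map_zpow, map_zpow, hθ i j hij]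
    · rw [K2.sym_mul_left, map_mul]
    · rw [K2.sym_mul_right, map_mul])

@[simp]
theorem lift_c (θ : Fin n → K2 F →* N) (hθ : ∀ i j, i ≠ j → ∀ x, θ i x ^ A j i = θ j x ^ A i j)
    (i : Fin n) (u v : Fˣ) : lift F A θ hθ (c F A i u v) = θ i (K2.sym F u v) :=
  PresentedGroup.abelianizationLift_of _ _ (i, u, v)

theorem hom_ext {φ ψ : K2A F A →* N} (h : ∀ i u v, φ (c F A i u v) = ψ (c F A i u v)) :
    φ = ψ :=
  PresentedGroup.abelianization_hom_ext fun x => h x.1 x.2.1 x.2.2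

end K2A

section PowPushout

variable {K G : Type*} [CommGroup K] [CommGroup G]

-- For `K = K₂(F)` this is `K2.powSubgroup F m`.
def powersClosure (K : Type*) [Group K] (m : ℕ) : Subgroup K :=
  Subgroup.closure {x | ∃ y : K, x = y ^ m}

theorem mk_zpow_prod_zpow_eq {a b a' b' p q : ℤ} {g : ℕ} (ha : a = g * a') (hb : b = g * b')
    (hpq : p * a' + q * b' = 1) (x : K) :
    ((QuotientGroup.mk' (powersClosure K g) (x ^ p), x ^ b') : (K ⧸ powersClosure K g) × K) ^ a =
      (QuotientGroup.mk' (powersClosure K g) (x ^ (-q)), x ^ a') ^ b := by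
  have hg : QuotientGroup.mk' (powersClosure K g) (x ^ (g : ℤ)) = 1 :=
    (QuotientGroup.eq_one_iff _).2 (Subgroup.subset_closure ⟨x, zpow_natCast x g⟩)
  refine Prod.ext ?_ ?_
  · change QuotientGroup.mk' _ (x ^ p) ^ a = QuotientGroup.mk' _ (x ^ (-q)) ^ b
    rw [← map_zpow, ← map_zpow, ← zpow_mul, ← zpow_mul,
      show p * a = -q * b + g by rw [ha, hb]; linear_combination g * hpq, zpow_add, map_mul,
      hg, mul_one]
  · change (x ^ b') ^ a = (x ^ a') ^ b
    rw [← zpow_mul, ← zpow_mul, ha, hb]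
    ring_nf

theorem powersClosure_le_ker {a b a' b' : ℤ} {g : ℕ} (ha : a = g * a') (hb : b = g * b')
    {ι₀ ι₁ : K →* G} (hι : ∀ x, ι₀ x ^ a = ι₁ x ^ b) :
    powersClosure K g ≤ (ι₀ ^ a' * ι₁ ^ (-b')).ker := by
  refine (Subgroup.closure_le _).2 ?_
  rintro _ ⟨y, rfl⟩
  rw [SetLike.mem_coe, MonoidHom.mem_ker, ← zpow_natCast, map_zpow, MonoidHom.mul_apply,
    MonoidHom.zpow_apply, MonoidHom.zpow_apply, mul_zpow, ← zpow_mul, ← zpow_mul, mul_comm a',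
    mul_comm (-b'), ← ha, mul_neg, ← hb, zpow_neg, hι, mul_inv_cancel]

/-- `hgen` and `hlift` say that `G` is presented by two copies `ι₀, ι₁` of `K` subject only to
`ι₀(x)^a = ι₁(x)^b`. -/
theorem nonempty_mulEquiv_quotient_prod {a b a' b' p q : ℤ} {g : ℕ}
    (ha : a = g * a') (hb : b = g * b') (hpq : p * a' + q * b' = 1)
    (ι₀ ι₁ : K →* G) (hι : ∀ x, ι₀ x ^ a = ι₁ x ^ b)
    (hgen : ∀ φ : G →* G, φ.comp ι₀ = ι₀ → φ.comp ι₁ = ι₁ → φ = MonoidHom.id G)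
    (hlift : ∀ θ₀ θ₁ : K →* (K ⧸ powersClosure K g) × K, (∀ x, θ₀ x ^ a = θ₁ x ^ b) →
      ∃ φ : G →* (K ⧸ powersClosure K g) × K, φ.comp ι₀ = θ₀ ∧ φ.comp ι₁ = θ₁) :
    Nonempty (G ≃* (K ⧸ powersClosure K g) × K) := by
  set H := powersClosure K g
  set π := QuotientGroup.mk' H
  obtain ⟨Φ, hΦ₀, hΦ₁⟩ := hlift ((π.comp (zpowGroupHom p)).prod (zpowGroupHom b'))
    ((π.comp (zpowGroupHom (-q))).prod (zpowGroupHom a')) (mk_zpow_prod_zpow_eq ha hb hpq)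
  have hΦ₀' : ∀ x, Φ (ι₀ x) = (π (x ^ p), x ^ b') := fun x => DFunLike.congr_fun hΦ₀ x
  have hΦ₁' : ∀ x, Φ (ι₁ x) = (π (x ^ (-q)), x ^ a') := fun x => DFunLike.congr_fun hΦ₁ x
  let Ψ : (K ⧸ H) × K →* G :=
    (QuotientGroup.lift H _ (powersClosure_le_ker ha hb hι)).coprod (ι₀ ^ q * ι₁ ^ p)
  refine ⟨MonoidHom.toMulEquiv Φ Ψ (hgen _ ?_ ?_) ?_⟩
  · refine MonoidHom.ext fun x => ?_
    change Ψ (Φ (ι₀ x)) = ι₀ x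
    rw [hΦ₀']
    change (ι₀ (x ^ p) ^ a' * ι₁ (x ^ p) ^ (-b')) * (ι₀ (x ^ b') ^ q * ι₁ (x ^ b') ^ p) = ι₀ x
    simp only [map_zpow, ← zpow_mul]
    rw [mul_mul_mul_comm, ← zpow_add, ← zpow_add,
      show p * a' + b' * q = 1 by linear_combination hpq, show p * -b' + b' * p = 0 by ring, zpow_one, zpow_zero, mul_one]
  · refine MonoidHom.ext fun x => ?_
    change Ψ (Φ (ι₁ x)) = ι₁ x
    rw [hΦ₁']
    change (ι₀ (x ^ (-q)) ^ a' * ι₁ (x ^ (-q)) ^ (-b')) * (ι₀ (x ^ a') ^ q * ι₁ (x ^ a') ^ p) =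
      ι₁ x
    simp only [map_zpow, ← zpow_mul]
    rw [mul_mul_mul_comm, ← zpow_add, ← zpow_add, show -q * a' + a' * q = 0 by ring,
      show -q * -b' + a' * p = 1 by linear_combination hpq, zpow_one, zpow_zero, one_mul]
  · refine MonoidHom.ext fun ⟨z, y⟩ => ?_
    obtain ⟨x, rfl⟩ := QuotientGroup.mk'_surjective H z
    change Φ (ι₀ x ^ a' * ι₁ x ^ (-b') * (ι₀ y ^ q * ι₁ y ^ p)) = (π x, y)
    simp only [map_mul, map_zpow, hΦ₀', hΦ₁', Prod.pow_mk, Prod.mk_mul_mk, ← zpow_mul, ← zpow_add]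
    rw [show p * a' + -q * -b' = 1 by linear_combination hpq, show p * q + -q * p = 0 by ring,
      show b' * a' + a' * -b' = 0 by ring, show b' * q + a' * p = 1 by linear_combination hpq]
    simp

end PowPushout

theorem odd_rank2_one_zero {a : ℤ} (b : ℤ) (hao : Odd a) :
    Odd ((!![2, -b; -a, 2] : Matrix (Fin 2) (Fin 2) ℤ) 1 0) := by
  simpa using hao.neg

theorem odd_rank2_zero_one (a : ℤ) {b : ℤ} (hbo : Odd b) :
    Odd ((!![2, -b; -a, 2] : Matrix (Fin 2) (Fin 2) ℤ) 0 1) := by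
  simpa using hbo.neg

namespace K2A

variable {a b : ℤ} (hao : Odd a) (hbo : Odd b)

noncomputable abbrev rank2SymHom₀ : K2 F →* K2A F !![2, -b; -a, 2] :=
  symHom F _ zero_ne_one (odd_rank2_one_zero b hao)

noncomputable abbrev rank2SymHom₁ : K2 F →* K2A F !![2, -b; -a, 2] :=
  symHom F _ one_ne_zero (odd_rank2_zero_one a hbo)

theorem rank2SymHom_zpow_eq (x : K2 F) : rank2SymHom₀ F hao x ^ a = rank2SymHom₁ F hbo x ^ b := by
  simpa [zpow_neg] using symHom_zpow_eq F _ zero_ne_one (odd_rank2_one_zero b hao)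
    (odd_rank2_zero_one a hbo) x

theorem rank2_hom_ext {N : Type*} [CommGroup N] {φ ψ : K2A F !![2, -b; -a, 2] →* N}
    (h₀ : φ.comp (rank2SymHom₀ F hao) = ψ.comp (rank2SymHom₀ F hao))
    (h₁ : φ.comp (rank2SymHom₁ F hbo) = ψ.comp (rank2SymHom₁ F hbo)) : φ = ψ := by
  refine hom_ext F _ fun i u v => ?_
  fin_cases i
  · simpa using DFunLike.congr_fun h₀ (K2.sym F u v)
  · simpa using DFunLike.congr_fun h₁ (K2.sym F u v)

theorem rank2_exists_lift {N : Type*} [CommGroup N] (θ₀ θ₁ : K2 F →* N)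
    (hθ : ∀ x, θ₀ x ^ a = θ₁ x ^ b) :
    ∃ φ : K2A F !![2, -b; -a, 2] →* N,
      φ.comp (rank2SymHom₀ F hao) = θ₀ ∧ φ.comp (rank2SymHom₁ F hbo) = θ₁ := by
  refine ⟨lift F _ ![θ₀, θ₁] fun i j hij x => ?_, K2.hom_ext F fun u v => ?_,
    K2.hom_ext F fun u v => ?_⟩
  · fin_cases i <;> fin_cases j
    · exact absurd rfl hij
    · simp [zpow_neg, hθ]
    · simp [zpow_neg, hθ]
    · exact absurd rfl hij
  · simp
  · simp

end K2A

theorem K2A_rank2_odd_odd_general (a b : ℤ)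
    (hao : Odd a) (hbo : Odd b) (F : Type) [Field F] :
    Nonempty (K2A F !![2, -b; -a, 2] ≃*
      ((K2 F ⧸ K2.powSubgroup F (Int.gcd a b)) × K2 F)) := by
  have hg : 0 < Int.gcd a b := Int.gcd_pos_of_ne_zero_left b (by rintro rfl; simp at hao)
  obtain ⟨p, q, hpq⟩ := Int.isCoprime_iff_gcd_eq_one.2 (Int.gcd_div_gcd_div_gcd hg)
  exact nonempty_mulEquiv_quotient_prod (Int.mul_ediv_cancel' (Int.gcd_dvd_left a b)).symm
    (Int.mul_ediv_cancel' (Int.gcd_dvd_right a b)).symm hpq _ _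
    (K2A.rank2SymHom_zpow_eq F hao hbo)
    (fun _ h₀ h₁ => K2A.rank2_hom_ext F hao hbo (by simpa using h₀) (by simpa using h₁))
    (K2A.rank2_exists_lift F hao hbo)

/-- For positive odd integers `a, b` and the GCM with rows `(2,-b)`, `(-a,2)`,
`K₂(A,F) ≅ (K₂(F)/hK₂(F)) × K₂(F)` where `h = gcd(a,b)`. -/
theorem K2A_rank2_odd_odd (a b : ℤ) (ha : 0 < a) (hb : 0 < b)
    (hao : Odd a) (hbo : Odd b) (F : Type) [Field F] :
    Nonempty (K2A F !![2, -b; -a, 2] ≃*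
      ((K2 F ⧸ K2.powSubgroup F (Int.gcd a b)) × K2 F)) :=
  K2A_rank2_odd_odd_general a b hao hbo F
end
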